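/- arXiv:2406.03623 — 2 statements merged into one kernel-verified Lean document; each statement's English description precedes it below -/
import Mathlib

section
/- Let λ be any frequency. Then: (i) for every finite set A ⊆ ℕ, sup_{t∈ℝ} |∑_{n∈A} e^{-iλ_n t}| = |A| (so the lower and upper democracy functions of {e^{-λ_n s}} in H_∞^λ are exactly N); and (ii) there exists a constant c > 0 such that for every finite A ⊆ ℕ and every unimodular (ε_n)_{n∈A}, sup_{t∈ℝ} |∑_{n∈A} ε_n e^{-iλ_n t}| ≥ c·|A|^{1/2} (so the lower super-democracy function of {e^{-λ_n s}} in H_∞^λ is at least a constant times N^{1/2}). -/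
open Filter Finset

/-- The `H_∞^λ` norm of the `λ`-Dirichlet polynomial `∑_{n∈A} a_n e^{-λ_n s}`:
`sup_{t∈ℝ} |∑_{n∈A} a_n e^{-iλ_n t}|`. -/
noncomputable def dirichletSupNorm (Λ : ℕ → ℝ) (A : Finset ℕ) (a : ℕ → ℂ) : ℝ :=
  ⨆ t : ℝ, ‖∑ n ∈ A, a n * Complex.exp (-(Complex.I * (Λ n * t)))‖

/-!
The bound `|A|` for constant coefficients is the triangle inequality, attained at `t = 0`.
For the lower bound let `f(t) = ∑_{n∈A} a_n e^{-iλ_n t}`. Expanding `|f|²` and integrating over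
`[0, T]`, the diagonal contributes `T ∑ |a_n|²` while each cross term is bounded independently
of `T` by `2 |a_m| |a_n| / |λ_n - λ_m|`. Hence `T ∑ |a_n|² ≤ T sup |f|² + O(1)` for every `T`,
so `∑ |a_n|² ≤ sup |f|²`, which is `|A|` for unimodular coefficients: `c = 1` works.
-/

open Complex ComplexConjugate

lemma le_of_forall_pos_mul_le_mul_add {x y C : ℝ} (h : ∀ T > 0, x * T ≤ y * T + C) :
    x ≤ y := by
  by_contra! hyx
  have hT : 0 < (|C| + 1) / (x - y) := by positivity
  have hcancel : (x - y) * ((|C| + 1) / (x - y)) = |C| + 1 := mul_div_cancel₀ _ (by linarith)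
  linarith [h _ hT, le_abs_self C]

lemma norm_intervalIntegral_exp_I_mul_le {c : ℝ} (hc : c ≠ 0) (a b : ℝ) :
    ‖∫ t in a..b, exp (I * c * t)‖ ≤ 2 / |c| := by
  have hIc : I * c ≠ 0 := mul_ne_zero I_ne_zero (ofReal_ne_zero.2 hc)
  rw [integral_exp_mul_complex hIc, norm_div, norm_mul, norm_I, one_mul, norm_real,
    Real.norm_eq_abs]
  gcongr
  refine (norm_sub_le _ _).trans_eq ?_
  norm_num [norm_exp]

noncomputable def dirichletPoly (Λ : ℕ → ℝ) (A : Finset ℕ) (a : ℕ → ℂ) (t : ℝ) : ℂ :=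
  ∑ n ∈ A, a n * exp (-(I * (Λ n * t)))

section

variable (Λ : ℕ → ℝ) (A : Finset ℕ) (a : ℕ → ℂ)

lemma norm_dirichletPoly_le_sum (t : ℝ) : ‖dirichletPoly Λ A a t‖ ≤ ∑ n ∈ A, ‖a n‖ := by
  refine (norm_sum_le _ _).trans_eq (sum_congr rfl fun n _ => ?_)
  simp [norm_exp]

lemma bddAbove_range_norm_dirichletPoly : BddAbove (Set.range fun t ↦ ‖dirichletPoly Λ A a t‖) :=
  ⟨_, Set.forall_mem_range.2 (norm_dirichletPoly_le_sum Λ A a)⟩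

lemma norm_dirichletPoly_le_dirichletSupNorm (t : ℝ) :
    ‖dirichletPoly Λ A a t‖ ≤ dirichletSupNorm Λ A a :=
  le_ciSup (bddAbove_range_norm_dirichletPoly Λ A a) t

lemma dirichletSupNorm_nonneg : 0 ≤ dirichletSupNorm Λ A a :=
  (norm_nonneg _).trans (norm_dirichletPoly_le_dirichletSupNorm Λ A a 0)

lemma dirichletSupNorm_le_sum_norm : dirichletSupNorm Λ A a ≤ ∑ n ∈ A, ‖a n‖ :=
  ciSup_le (norm_dirichletPoly_le_sum Λ A a)

lemma dirichletPoly_zero : dirichletPoly Λ A a 0 = ∑ n ∈ A, a n := by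
  simp [dirichletPoly]

lemma dirichletSupNorm_one : dirichletSupNorm Λ A (fun _ ↦ 1) = #A := by
  refine le_antisymm ((dirichletSupNorm_le_sum_norm Λ A _).trans_eq (by simp)) ?_
  simpa [dirichletPoly_zero] using norm_dirichletPoly_le_dirichletSupNorm Λ A (fun _ ↦ 1) 0

lemma dirichletPoly_mul_conj (t : ℝ) :
    dirichletPoly Λ A a t * conj (dirichletPoly Λ A a t) =
      ∑ m ∈ A, ∑ n ∈ A, a m * conj (a n) * exp (I * ↑(Λ n - Λ m) * t) := by
  rw [dirichletPoly, map_sum, sum_mul_sum]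
  refine sum_congr rfl fun m _ => sum_congr rfl fun n _ => ?_
  rw [map_mul, ← exp_conj, mul_mul_mul_comm, ← exp_add]
  congr 2
  simp only [map_neg, map_mul, conj_I, conj_ofReal, ofReal_sub]
  ring

lemma intervalIntegral_dirichletPoly_mul_conj (T : ℝ) :
    ∫ t in (0 : ℝ)..T, dirichletPoly Λ A a t * conj (dirichletPoly Λ A a t) =
      ∑ m ∈ A, ∑ n ∈ A, a m * conj (a n) * ∫ t in (0 : ℝ)..T, exp (I * ↑(Λ n - Λ m) * t) := by
  simp_rw [dirichletPoly_mul_conj]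
  rw [intervalIntegral.integral_finsetSum fun m _ => ?_]
  · refine sum_congr rfl fun m _ => ?_
    rw [intervalIntegral.integral_finsetSum fun n _ => ?_]
    · simp_rw [intervalIntegral.integral_const_mul]
    · exact (by fun_prop : Continuous _).intervalIntegrable _ _
  · exact (by fun_prop : Continuous _).intervalIntegrable _ _

lemma exists_norm_intervalIntegral_dirichletPoly_mul_conj_sub_le (hΛ : Set.InjOn Λ A) :
    ∃ C, ∀ T, ‖(∫ t in (0 : ℝ)..T, dirichletPoly Λ A a t * conj (dirichletPoly Λ A a t)) -
      ↑(T * ∑ n ∈ A, ‖a n‖ ^ 2)‖ ≤ C := by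
  refine ⟨∑ m ∈ A, ∑ n ∈ A.erase m, ‖a m‖ * ‖a n‖ * (2 / |Λ n - Λ m|), fun T => ?_⟩
  have hdiag : ∀ m, a m * conj (a m) * ∫ t in (0 : ℝ)..T, exp (I * ↑(Λ m - Λ m) * t) =
      ↑(T * ‖a m‖ ^ 2) := by
    intro m
    simp [mul_conj', mul_comm]
  rw [intervalIntegral_dirichletPoly_mul_conj, mul_sum, ofReal_sum, ← sum_sub_distrib]
  refine (norm_sum_le _ _).trans (sum_le_sum fun m hm => ?_)
  rw [← add_sum_erase A _ hm, hdiag m, add_sub_cancel_left]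
  refine (norm_sum_le _ _).trans (sum_le_sum fun n hn => ?_)
  obtain ⟨hnm, hn⟩ := mem_erase.1 hn
  have hΛnm : Λ n - Λ m ≠ 0 := sub_ne_zero.2 fun h => hnm (hΛ hn hm h)
  rw [norm_mul, norm_mul, norm_conj]
  gcongr
  exact norm_intervalIntegral_exp_I_mul_le hΛnm 0 T

lemma sum_norm_sq_le_dirichletSupNorm_sq (hΛ : Set.InjOn Λ A) :
    ∑ n ∈ A, ‖a n‖ ^ 2 ≤ dirichletSupNorm Λ A a ^ 2 := by
  set f := dirichletPoly Λ A a
  obtain ⟨C, hC⟩ := exists_norm_intervalIntegral_dirichletPoly_mul_conj_sub_le Λ A a hΛ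
  refine le_of_forall_pos_mul_le_mul_add (C := C) fun T hT => ?_
  have hupper : ‖∫ t in (0 : ℝ)..T, f t * conj (f t)‖ ≤ dirichletSupNorm Λ A a ^ 2 * T := by
    have hbound : ∀ t ∈ Set.uIoc 0 T, ‖f t * conj (f t)‖ ≤ dirichletSupNorm Λ A a ^ 2 := by
      intro t _
      rw [norm_mul, norm_conj, ← sq]
      gcongr
      exact norm_dirichletPoly_le_dirichletSupNorm Λ A a t
    simpa [abs_of_pos hT] using intervalIntegral.norm_integral_le_of_norm_le_const hbound
  have hmean : ‖((T * ∑ n ∈ A, ‖a n‖ ^ 2 : ℝ) : ℂ)‖ = (∑ n ∈ A, ‖a n‖ ^ 2) * T := by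
    rw [norm_real, Real.norm_of_nonneg (by positivity), mul_comm]
  have htriangle := norm_sub_norm_le ((T * ∑ n ∈ A, ‖a n‖ ^ 2 : ℝ) : ℂ)
    (∫ t in (0 : ℝ)..T, f t * conj (f t))
  rw [norm_sub_rev] at htriangle
  linarith [hC T]

lemma sqrt_card_le_dirichletSupNorm (hΛ : Set.InjOn Λ A) (ha : ∀ n ∈ A, ‖a n‖ = 1) :
    √(#A) ≤ dirichletSupNorm Λ A a := by
  refine Real.sqrt_le_iff.2 ⟨dirichletSupNorm_nonneg Λ A a, ?_⟩
  calc (#A : ℝ) = ∑ n ∈ A, ‖a n‖ ^ 2 := by simp +contextual [ha]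
    _ ≤ _ := sum_norm_sq_le_dirichletSupNorm_sq Λ A a hΛ

end

theorem democracy_Hinf_general_general (Λ : ℕ → ℝ) (hmono : StrictMono Λ) :
    (∀ A : Finset ℕ, dirichletSupNorm Λ A (fun _ => 1) = A.card) ∧
      ∃ c : ℝ, 0 < c ∧ ∀ (A : Finset ℕ) (ε : ℕ → ℂ),
        (∀ n ∈ A, ‖ε n‖ = 1) →
        c * Real.sqrt A.card ≤ dirichletSupNorm Λ A ε :=
  ⟨dirichletSupNorm_one Λ, 1, one_pos, fun A ε hε => by
    simpa using sqrt_card_le_dirichletSupNorm Λ A ε hmono.injective.injOn hε⟩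

/-- For any frequency `λ`: the lower and upper democracy functions of `{e^{-λ_n s}}` in
`H_∞^λ` are exactly `N`, and the lower super-democracy function is at least a constant
times `N^{1/2}`. -/
theorem democracy_Hinf_general (Λ : ℕ → ℝ) (hmono : StrictMono Λ)
    (hpos : ∀ n, 0 ≤ Λ n) (hunb : Tendsto Λ atTop atTop) :
    (∀ A : Finset ℕ, dirichletSupNorm Λ A (fun _ => 1) = A.card) ∧
      ∃ c : ℝ, 0 < c ∧ ∀ (A : Finset ℕ) (ε : ℕ → ℂ),
        (∀ n ∈ A, ‖ε n‖ = 1) →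
        c * Real.sqrt A.card ≤ dirichletSupNorm Λ A ε :=
  democracy_Hinf_general_general Λ hmono
end

section
/- Let λ be a frequency containing arbitrarily long arithmetic progressions. Then for every integer N ≥ 1 there exist a finite set A ⊆ ℕ with |A| ≥ N and signs ε_n ∈ {−1, 1} for n ∈ A such that sup_{t∈ℝ} |∑_{n∈A} ε_n e^{-iλ_n t}| ≤ 2·N^{1/2}. (Combined with the general lower bound, this shows that the lower super-democracy function of {e^{-λ_n s}} in H_∞^λ grows like N^{1/2}.) -/
open Filter Finset

/-!
The Rudin–Shapiro pairs `P_{m+1} = P_m + z^{2^m} Q_m`, `Q_{m+1} = P_m - z^{2^m} Q_m` have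
`±1` coefficients, and the parallelogram law gives `|P_m|² + |Q_m|² = 2^{m+1}` on the unit
circle, so `|P_m| ≤ √(2^{m+1})` there. Choosing `N ≤ 2^m ≤ 2N` and placing the coefficients
of `P_m` on an arithmetic progression `a + jb` of frequencies turns the Dirichlet polynomial
into `e^{-iat} P_m(e^{-ibt})`, whose modulus is at most `√(2^{m+1}) ≤ 2√N`.
-/

open Complex Function

def appendAt {α : Type*} (L : ℕ) (f g : ℕ → α) (k : ℕ) : α :=
  if k < L then f k else g (k - L)

noncomputable def powSum (c : ℕ → ℝ) (L : ℕ) (z : ℂ) : ℂ :=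
  ∑ k ∈ range L, (c k : ℂ) * z ^ k

lemma powSum_appendAt (f g : ℕ → ℝ) (L M : ℕ) (z : ℂ) :
    powSum (appendAt L f g) (L + M) z = powSum f L z + z ^ L * powSum g M z := by
  simp only [powSum, sum_range_add, appendAt, mul_sum]
  congr 1
  · exact sum_congr rfl fun k hk => by rw [if_pos (mem_range.mp hk)]
  · refine sum_congr rfl fun k _ => ?_
    rw [if_neg (by omega), Nat.add_sub_cancel_left, pow_add]
    ring

lemma powSum_neg (c : ℕ → ℝ) (L : ℕ) (z : ℂ) : powSum (-c) L z = -powSum c L z := by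
  simp [powSum, ← sum_neg_distrib]

/-- The coefficients of `(P_m, Q_m)`; only the indices below `2^m` matter. -/
def rudinShapiro : ℕ → (ℕ → ℝ) × (ℕ → ℝ)
  | 0 => (1, 1)
  | m + 1 =>
    (appendAt (2 ^ m) (rudinShapiro m).1 (rudinShapiro m).2,
      appendAt (2 ^ m) (rudinShapiro m).1 (-(rudinShapiro m).2))

lemma rudinShapiro_eq_one_or_eq_neg_one (m k : ℕ) :
    ((rudinShapiro m).1 k = 1 ∨ (rudinShapiro m).1 k = -1) ∧
      ((rudinShapiro m).2 k = 1 ∨ (rudinShapiro m).2 k = -1) := by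
  induction m generalizing k with
  | zero => simp [rudinShapiro]
  | succ m ih =>
    simp only [rudinShapiro, appendAt, Pi.neg_apply]
    split_ifs
    · exact ⟨(ih k).1, (ih k).1⟩
    · rcases (ih (k - 2 ^ m)).2 with h | h <;> simp [h]

theorem sq_norm_powSum_rudinShapiro_add (m : ℕ) {z : ℂ} (hz : ‖z‖ = 1) :
    ‖powSum (rudinShapiro m).1 (2 ^ m) z‖ ^ 2 + ‖powSum (rudinShapiro m).2 (2 ^ m) z‖ ^ 2 =
      2 ^ (m + 1) := by
  induction m with
  | zero => norm_num [rudinShapiro, powSum]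
  | succ m ih =>
    have hshift : ‖z ^ 2 ^ m * powSum (rudinShapiro m).2 (2 ^ m) z‖ =
        ‖powSum (rudinShapiro m).2 (2 ^ m) z‖ := by
      rw [norm_mul, norm_pow, hz, one_pow, one_mul]
    simp only [rudinShapiro, pow_succ 2 m, mul_two, powSum_appendAt, powSum_neg, mul_neg,
      ← sub_eq_add_neg, parallelogram_law_with_norm ℂ, hshift, ih]
    ring

lemma norm_powSum_rudinShapiro_le (m : ℕ) {z : ℂ} (hz : ‖z‖ = 1) :
    ‖powSum (rudinShapiro m).1 (2 ^ m) z‖ ≤ √(2 ^ (m + 1)) :=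
  Real.le_sqrt_of_sq_le <| by
    linarith [sq_norm_powSum_rudinShapiro_add m hz,
      sq_nonneg ‖powSum (rudinShapiro m).2 (2 ^ m) z‖]

lemma norm_exp_neg_I_mul_ofReal_mul (x t : ℝ) : ‖exp (-(I * (x * t)))‖ = 1 := by
  rw [show -(I * (x * t)) = ((-(x * t) : ℝ) : ℂ) * I by push_cast; ring, norm_exp_ofReal_mul_I]

section ArithmeticProgression

variable {Λ : ℕ → ℝ} {g : ℕ → ℕ} {a b : ℝ} {M : ℕ}

lemma injOn_of_arithProg (hg : ∀ j < M, Λ (g j) = a + j * b) (hb : b ≠ 0) :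
    Set.InjOn g (range M) := fun i hi j hj hij => by
  have := (hg i (mem_range.mp hi)).symm.trans (hij ▸ hg j (mem_range.mp hj))
  exact_mod_cast mul_right_cancel₀ hb (add_left_cancel this)

lemma sum_image_arithProg (hg : ∀ j < M, Λ (g j) = a + j * b) (hb : b ≠ 0) (c : ℕ → ℝ)
    (t : ℝ) :
    ∑ n ∈ (range M).image g, (c (invFunOn g (range M) n) : ℂ) * exp (-(I * (Λ n * t))) =
      exp (-(I * (a * t))) * powSum c M (exp (-(I * (b * t)))) := by
  rw [sum_image (injOn_of_arithProg hg hb), powSum, mul_sum]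
  refine sum_congr rfl fun j hj => ?_
  rw [(injOn_of_arithProg hg hb).leftInvOn_invFunOn hj, hg j (mem_range.mp hj),
    ← exp_nat_mul, mul_left_comm (exp _), ← exp_add]
  congr 2
  push_cast
  ring

theorem dirichletSupNorm_arithProg_le (hg : ∀ j < M, Λ (g j) = a + j * b) (hb : b ≠ 0)
    (c : ℕ → ℝ) {C : ℝ} (hC : ∀ z : ℂ, ‖z‖ = 1 → ‖powSum c M z‖ ≤ C) :
    dirichletSupNorm Λ ((range M).image g) (fun n => (c (invFunOn g (range M) n) : ℂ)) ≤ C :=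
  ciSup_le fun t => by
    rw [sum_image_arithProg hg hb, norm_mul, norm_exp_neg_I_mul_ofReal_mul, one_mul]
    exact hC _ (norm_exp_neg_I_mul_ofReal_mul _ _)

end ArithmeticProgression

lemma exists_two_pow_mem_Icc {N : ℕ} (hN : N ≠ 0) : ∃ m, N ≤ 2 ^ m ∧ 2 ^ m ≤ 2 * N :=
  ⟨Nat.log 2 N + 1, (Nat.lt_pow_succ_log_self one_lt_two N).le, by
    rw [pow_succ']; exact Nat.mul_le_mul_left 2 (Nat.pow_log_le_self 2 hN)⟩

theorem rudin_shapiro_signs_Hinf_general (Λ : ℕ → ℝ)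
    (hAP : ∀ N : ℕ, ∃ (a : ℝ) (b : ℝ), 0 < b ∧
      ∀ k : ℕ, 1 ≤ k → k ≤ N → ∃ n : ℕ, Λ n = a + k * b) :
    ∀ N : ℕ, 1 ≤ N → ∃ (A : Finset ℕ) (ε : ℕ → ℝ), N ≤ A.card ∧
      (∀ n ∈ A, ε n = 1 ∨ ε n = -1) ∧
      dirichletSupNorm Λ A (fun n => (ε n : ℂ)) ≤ 2 * Real.sqrt N := by
  intro N hN
  obtain ⟨m, hNm, hmN⟩ := exists_two_pow_mem_Icc (Nat.one_le_iff_ne_zero.mp hN)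
  obtain ⟨a, b, hb, hprog⟩ := hAP (2 ^ m)
  choose! n hn using hprog
  have hg : ∀ j < 2 ^ m, Λ (n (j + 1)) = (a + b) + j * b := fun j hj => by
    rw [hn (j + 1) (by omega) (by omega)]; push_cast; ring
  have hbound : √(2 ^ (m + 1)) ≤ 2 * √N := by
    rw [show (2 : ℝ) * √N = √(2 ^ 2 * N) by simp]
    gcongr
    rw [pow_succ', pow_two, mul_assoc]
    exact_mod_cast Nat.mul_le_mul_left 2 hmN
  refine ⟨(range (2 ^ m)).image (fun j => n (j + 1)),
    (rudinShapiro m).1 ∘ invFunOn (fun j => n (j + 1)) (range (2 ^ m)), ?_,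
    fun _ _ => (rudinShapiro_eq_one_or_eq_neg_one m _).1,
    dirichletSupNorm_arithProg_le hg hb.ne' _ fun z hz =>
      (norm_powSum_rudinShapiro_le m hz).trans hbound⟩
  rwa [card_image_of_injOn (injOn_of_arithProg hg hb.ne'), card_range]

/-- If the frequency `λ` contains arbitrarily long arithmetic progressions then, for every
`N`, there are a set `A` with `|A| ≥ N` and signs `ε_n ∈ {−1,1}` such that
`‖∑_{n∈A} ε_n e^{-λ_n s}‖_{H_∞^λ} ≤ 2 N^{1/2}`. -/
theorem rudin_shapiro_signs_Hinf (Λ : ℕ → ℝ) (hmono : StrictMono Λ)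
    (hpos : ∀ n, 0 ≤ Λ n) (hunb : Tendsto Λ atTop atTop)
    (hAP : ∀ N : ℕ, ∃ (a : ℝ) (b : ℝ), 0 < b ∧
      ∀ k : ℕ, 1 ≤ k → k ≤ N → ∃ n : ℕ, Λ n = a + k * b) :
    ∀ N : ℕ, 1 ≤ N → ∃ (A : Finset ℕ) (ε : ℕ → ℝ), N ≤ A.card ∧
      (∀ n ∈ A, ε n = 1 ∨ ε n = -1) ∧
      dirichletSupNorm Λ A (fun n => (ε n : ℂ)) ≤ 2 * Real.sqrt N :=
  rudin_shapiro_signs_Hinf_general Λ hAP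
end
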